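/- arXiv:0705.2480 — 3 statements merged into one kernel-verified Lean document; each statement's English description precedes it below -/
import Mathlib

section
/- For the hypercube Q_d with d ≥ 2, the effective resistance between two vertices at Hamming distance 2 equals (2^{d−1} − 1)/((d−1)·2^{d−2}). -/
open Matrix

/-- The hypercube graph `Q_d`: vertices are binary strings of length `d`, with an edge
between strings differing in exactly one bit. -/
def hypercubeGraph (d : ℕ) : SimpleGraph (Fin d → ZMod 2) where
  Adj x y := hammingDist x y = 1
  symm := ⟨fun (x y : Fin d → ZMod 2) (h : hammingDist x y = 1) => show hammingDist y x = 1 by rwa [hammingDist_comm]⟩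
  loopless := ⟨fun x (h : hammingDist x x = 1) => by simp [hammingDist_self] at h⟩

instance (d : ℕ) : DecidableRel (hypercubeGraph d).Adj := fun x y => Nat.decEq (hammingDist x y) 1

/-- The four Moore–Penrose pseudoinverse conditions for real matrices. -/
def IsMoorePenrose {V : Type*} [Fintype V] [DecidableEq V] (L Lp : Matrix V V ℝ) : Prop :=
  L * Lp * L = L ∧ Lp * L * Lp = Lp ∧ (L * Lp)ᵀ = L * Lp ∧ (Lp * L)ᵀ = Lp * L

/-- Effective resistance between two nodes, from the pseudoinverse of the Laplacian. -/
def effRes {V : Type*} (Lp : Matrix V V ℝ) (α β : V) : ℝ :=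
  Lp α α + Lp β β - 2 * Lp α β

/-!
If `L` is symmetric with Moore–Penrose pseudoinverse `L⁺` and `L f = e_α - e_β`, then
`(e_α - e_β)ᵀ L⁺ (e_α - e_β) = f α - f β`. On `Q_d` take `f = g_α - g_β`, where
`g_α x = G (dist α x)` is the radial Green function, `L g_α = e_α - 2⁻ᵈ`. On radial functions the
Laplacian at distance `m` is `(d - m) (G m - G (m + 1)) + m (G m - G (m - 1))`, and the Green
equation is solved by letting `G` drop by `S k = (2ᵈ - ∑_{l ≤ k} C(d, l)) / (2ᵈ C(d, k) (d - k))`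
from distance `k` to `k + 1`. So the resistance at distance `m` is `2 ∑_{k < m} S k`, which for
`m = 2` simplifies to the closed form.
-/

open Finset

namespace IsMoorePenrose

variable {V : Type*} [Fintype V] [DecidableEq V] {L A B : Matrix V V ℝ}

theorem transpose (h : IsMoorePenrose L A) : IsMoorePenrose Lᵀ Aᵀ := by
  obtain ⟨h₁, h₂, h₃, h₄⟩ := h
  refine ⟨?_, ?_, ?_, ?_⟩
  · rw [← transpose_mul, ← transpose_mul, ← Matrix.mul_assoc, h₁]
  · rw [← transpose_mul, ← transpose_mul, ← Matrix.mul_assoc, h₂]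
  · rw [← transpose_mul, transpose_transpose, h₄]
  · rw [← transpose_mul, transpose_transpose, h₃]

theorem unique (hA : IsMoorePenrose L A) (hB : IsMoorePenrose L B) : A = B := by
  obtain ⟨hA₁, hA₂, hA₃, hA₄⟩ := hA
  obtain ⟨hB₁, hB₂, hB₃, hB₄⟩ := hB
  have hLA : L * A = L * B := by
    calc L * A = (L * B * L * A)ᵀ := by rw [hB₁, hA₃]
    _ = (L * A)ᵀ * (L * B)ᵀ := by rw [← transpose_mul, Matrix.mul_assoc, Matrix.mul_assoc]
    _ = L * B := by rw [hA₃, hB₃, ← Matrix.mul_assoc, hA₁]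
  have hAL : A * L = B * L := by
    calc A * L = (A * (L * B * L))ᵀ := by rw [hB₁, hA₄]
    _ = (B * L)ᵀ * (A * L)ᵀ := by rw [← transpose_mul, Matrix.mul_assoc, Matrix.mul_assoc]
    _ = B * L := by rw [hA₄, hB₄, Matrix.mul_assoc, ← Matrix.mul_assoc L, hA₁]
  calc A = A * L * A := hA₂.symm
  _ = B * L * B := by rw [hAL, Matrix.mul_assoc, hLA, ← Matrix.mul_assoc]
  _ = B := hB₂

theorem isSymm (hL : L.IsSymm) (h : IsMoorePenrose L A) : A.IsSymm := by
  have h' := h.transpose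
  rw [hL.eq] at h'
  exact (h.unique h').symm

theorem mulVec_dotProduct_mulVec_mulVec (hL : L.IsSymm) (h : IsMoorePenrose L A) (f : V → ℝ) :
    (L *ᵥ f) ⬝ᵥ (A *ᵥ (L *ᵥ f)) = f ⬝ᵥ (L *ᵥ f) := by
  rw [dotProduct_comm, dotProduct_mulVec, ← mulVec_transpose, hL.eq, mulVec_mulVec, mulVec_mulVec,
    h.1, dotProduct_comm]

end IsMoorePenrose

section effRes

variable {V : Type*} [Fintype V] [DecidableEq V]

theorem effRes_eq_dotProduct_mulVec {A : Matrix V V ℝ} (hA : A.IsSymm) (α β : V) :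
    effRes A α β = (Pi.single α 1 - Pi.single β 1) ⬝ᵥ (A *ᵥ (Pi.single α 1 - Pi.single β 1)) := by
  have hβα : A β α = A α β := hA.apply α β
  simp only [mulVec_sub, mulVec_single_one, sub_dotProduct, single_dotProduct, Pi.sub_apply,
    col_apply, one_mul, effRes, hβα]
  ring

theorem IsMoorePenrose.effRes_eq_sub {L A : Matrix V V ℝ} (hL : L.IsSymm)
    (h : IsMoorePenrose L A) {f : V → ℝ} {α β : V}
    (hf : L *ᵥ f = Pi.single α 1 - Pi.single β 1) : effRes A α β = f α - f β := by
  rw [effRes_eq_dotProduct_mulVec (h.isSymm hL), ← hf, h.mulVec_dotProduct_mulVec_mulVec hL, hf,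
    dotProduct_sub, dotProduct_single, dotProduct_single, mul_one, mul_one]

end effRes

namespace Hypercube

noncomputable def tail (d k : ℕ) : ℝ := 2 ^ d - ∑ l ∈ range (k + 1), (d.choose l : ℝ)

/-- The current `tail d k / 2 ^ d` of the Green function crosses the `d.choose k * (d - k)` edges
between distance `k` and `k + 1`; this is the potential drop along each of them, half the
paper's `R_{k+1} - R_k`. -/
noncomputable def potentialDrop (d k : ℕ) : ℝ := tail d k / (2 ^ d * d.choose k * (d - k))

noncomputable def greenPotential (d m : ℕ) : ℝ := -∑ k ∈ range m, potentialDrop d k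

theorem tail_zero (d : ℕ) : tail d 0 = 2 ^ d - 1 := by
  simp [tail]

theorem tail_self (d : ℕ) : tail d d = 0 := by
  rw [tail, sub_eq_zero]
  exact_mod_cast (Nat.sum_range_choose d).symm

theorem tail_succ (d k : ℕ) : tail d (k + 1) = tail d k - d.choose (k + 1) := by
  rw [tail, tail, sum_range_succ]
  ring

theorem sub_mul_potentialDrop {d k : ℕ} (hk : k ≤ d) :
    (d - k) * potentialDrop d k = tail d k / (2 ^ d * d.choose k) := by
  rcases hk.eq_or_lt with rfl | hlt
  · simp [tail_self]
  have hdk : (d : ℝ) - k ≠ 0 := sub_ne_zero.mpr (by exact_mod_cast hlt.ne')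
  have hc : (d.choose k : ℝ) ≠ 0 := by exact_mod_cast (Nat.choose_pos hk).ne'
  rw [potentialDrop]
  field_simp

theorem succ_mul_potentialDrop {d k : ℕ} (hk : k < d) :
    (k + 1) * potentialDrop d k = tail d k / (2 ^ d * d.choose (k + 1)) := by
  have hchoose : (d.choose (k + 1) : ℝ) * (k + 1) = d.choose k * (d - k) := by
    rw [← Nat.cast_sub hk.le]
    exact_mod_cast Nat.choose_succ_right_eq d k
  have hdk : (d : ℝ) - k ≠ 0 := sub_ne_zero.mpr (by exact_mod_cast hk.ne')
  have hc : (d.choose k : ℝ) ≠ 0 := by exact_mod_cast (Nat.choose_pos hk.le).ne'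
  have hc' : (d.choose (k + 1) : ℝ) ≠ 0 := by exact_mod_cast (Nat.choose_pos hk).ne'
  rw [potentialDrop]
  field_simp
  linear_combination tail d k * hchoose

theorem greenPotential_zero (d : ℕ) : greenPotential d 0 = 0 := by
  rw [greenPotential, sum_range_zero, neg_zero]

theorem greenPotential_succ (d m : ℕ) :
    greenPotential d (m + 1) = greenPotential d m - potentialDrop d m := by
  rw [greenPotential, greenPotential, sum_range_succ]
  ring

/-- The Green function equation `Δg = δ - 1/2^d` at a vertex at distance `m`. -/
theorem greenPotential_equation {d m : ℕ} (hm : m ≤ d) :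
    (d - m) * (greenPotential d m - greenPotential d (m + 1))
      + m * (greenPotential d m - greenPotential d (m - 1))
      = (if m = 0 then 1 else 0) - 1 / 2 ^ d := by
  rcases m with _ | k
  · rw [greenPotential_succ, sub_sub_cancel, sub_mul_potentialDrop (Nat.zero_le d), Nat.cast_zero,
      zero_mul, add_zero, if_pos rfl]
    rw [tail_zero, Nat.choose_zero_right, Nat.cast_one, mul_one]
    field_simp
  · rw [greenPotential_succ d (k + 1), sub_sub_cancel, Nat.add_sub_cancel, greenPotential_succ,
      sub_sub_cancel_left, sub_mul_potentialDrop hm, Nat.cast_succ, mul_neg,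
      succ_mul_potentialDrop hm, tail_succ, if_neg k.succ_ne_zero]
    have hc : (d.choose (k + 1) : ℝ) ≠ 0 := by exact_mod_cast (Nat.choose_pos hm).ne'
    field_simp
    ring

theorem eq_add_one_of_ne : ∀ {a b : ZMod 2}, a ≠ b → a = b + 1 := by decide

section flip

variable {ι : Type*} [DecidableEq ι]

def flip (x : ι → ZMod 2) (i : ι) : ι → ZMod 2 := Function.update x i (x i + 1)

@[simp]
theorem flip_self (x : ι → ZMod 2) (i : ι) : flip x i i = x i + 1 := Function.update_self ..

theorem flip_of_ne (x : ι → ZMod 2) {i j : ι} (h : j ≠ i) : flip x i j = x j :=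
  Function.update_of_ne h ..

theorem flip_injective (x : ι → ZMod 2) : Function.Injective (flip x) := by
  intro i j h
  by_contra hij
  have hi := congrFun h i
  rw [flip_self, flip_of_ne x hij] at hi
  exact succ_ne_self (x i) hi

variable [Fintype ι]

theorem hammingDist_flip_of_eq {α x : ι → ZMod 2} {i : ι} (h : α i = x i) :
    hammingDist α (flip x i) = hammingDist α x + 1 := by
  have hset : univ.filter (fun j => α j ≠ flip x i j)
      = insert i (univ.filter fun j => α j ≠ x j) := by
    ext j
    rcases eq_or_ne j i with rfl | hj
    · simp [h]
    · simp [flip_of_ne x hj, hj]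
  rw [hammingDist, hammingDist, hset, card_insert_of_notMem (by simp [h])]

theorem hammingDist_flip_of_ne {α x : ι → ZMod 2} {i : ι} (h : α i ≠ x i) :
    hammingDist α (flip x i) + 1 = hammingDist α x := by
  have hset : univ.filter (fun j => α j ≠ flip x i j)
      = (univ.filter fun j => α j ≠ x j).erase i := by
    ext j
    rcases eq_or_ne j i with rfl | hj
    · simp [eq_add_one_of_ne h]
    · simp [flip_of_ne x hj, hj]
  rw [hammingDist, hammingDist, hset, card_erase_add_one (by simp [h])]

theorem hammingDist_eq_one_iff {x y : ι → ZMod 2} : hammingDist x y = 1 ↔ ∃ i, flip x i = y := by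
  constructor
  · intro hxy
    obtain ⟨i, hi⟩ := card_eq_one.mp hxy
    refine ⟨i, funext fun j => ?_⟩
    rcases eq_or_ne j i with rfl | hj
    · have hne : x j ≠ y j := by simpa using (Finset.ext_iff.mp hi j)
      rw [flip_self, eq_add_one_of_ne hne.symm]
    · have heq : x j = y j := by simpa [hj] using (Finset.ext_iff.mp hi j)
      rw [flip_of_ne x hj, heq]
  · rintro ⟨i, rfl⟩
    rw [hammingDist_flip_of_eq rfl, hammingDist_self]

theorem sum_flip_hammingDist (a : ℕ → ℝ) {α x : ι → ZMod 2} {m : ℕ} (hm : hammingDist α x = m) :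
    ∑ i, a (hammingDist α (flip x i)) = (Fintype.card ι - m) * a (m + 1) + m * a (m - 1) := by
  subst hm
  rw [← sum_filter_add_sum_filter_not univ (fun i => α i = x i)]
  have hfar : ∀ i ∈ ({i | α i = x i} : Finset ι),
      a (hammingDist α (flip x i)) = a (hammingDist α x + 1) := fun i hi => by
    rw [hammingDist_flip_of_eq (mem_filter.mp hi).2]
  have hnear : ∀ i ∈ ({i | ¬α i = x i} : Finset ι),
      a (hammingDist α (flip x i)) = a (hammingDist α x - 1) := fun i hi => by
    rw [← hammingDist_flip_of_ne (mem_filter.mp hi).2, Nat.add_sub_cancel]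
  have hcard : (#{i | α i = x i} : ℝ) = Fintype.card ι - hammingDist α x := by
    rw [eq_sub_iff_add_eq, hammingDist]
    exact_mod_cast card_filter_add_card_filter_not (fun i => α i = x i)
  rw [sum_congr rfl hfar, sum_congr rfl hnear, sum_const, sum_const, nsmul_eq_mul, nsmul_eq_mul,
    hcard]
  rfl

end flip

variable {d : ℕ}

theorem neighborFinset_hypercubeGraph (x : Fin d → ZMod 2) :
    (hypercubeGraph d).neighborFinset x = univ.image (flip x) := by
  ext y
  simp only [SimpleGraph.mem_neighborFinset, mem_image, mem_univ, true_and]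
  exact hammingDist_eq_one_iff

theorem degree_hypercubeGraph (x : Fin d → ZMod 2) : (hypercubeGraph d).degree x = d := by
  rw [SimpleGraph.degree, neighborFinset_hypercubeGraph,
    card_image_of_injective _ (flip_injective x), card_univ, Fintype.card_fin]

theorem lapMatrix_mulVec_comp_hammingDist (a : ℕ → ℝ) {α x : Fin d → ZMod 2} {m : ℕ}
    (hm : hammingDist α x = m) :
    ((hypercubeGraph d).lapMatrix ℝ *ᵥ fun y => a (hammingDist α y)) x
      = (d - m) * (a m - a (m + 1)) + m * (a m - a (m - 1)) := by
  rw [SimpleGraph.lapMatrix_mulVec_apply, degree_hypercubeGraph, neighborFinset_hypercubeGraph,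
    sum_image fun i _ j _ h => flip_injective x h, sum_flip_hammingDist a hm, Fintype.card_fin, hm]
  ring

theorem lapMatrix_mulVec_greenPotential (α : Fin d → ZMod 2) :
    (hypercubeGraph d).lapMatrix ℝ *ᵥ (fun y => greenPotential d (hammingDist α y))
      = Pi.single α 1 - fun _ => 1 / 2 ^ d := by
  funext x
  have hle : hammingDist α x ≤ d := hammingDist_le_card_fintype.trans_eq (Fintype.card_fin d)
  rw [lapMatrix_mulVec_comp_hammingDist _ rfl, greenPotential_equation hle, Pi.sub_apply,
    Pi.single_apply]
  simp only [hammingDist_eq_zero, @eq_comm _ x α]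

theorem effRes_hypercubeGraph {Lp : Matrix (Fin d → ZMod 2) (Fin d → ZMod 2) ℝ}
    (hLp : IsMoorePenrose ((hypercubeGraph d).lapMatrix ℝ) Lp) {α β : Fin d → ZMod 2} {m : ℕ}
    (hm : hammingDist α β = m) : effRes Lp α β = -2 * greenPotential d m := by
  set g : (Fin d → ZMod 2) → (Fin d → ZMod 2) → ℝ := fun γ y => greenPotential d (hammingDist γ y)
  have hf : (hypercubeGraph d).lapMatrix ℝ *ᵥ (g α - g β) = Pi.single α 1 - Pi.single β 1 := by
    rw [mulVec_sub, lapMatrix_mulVec_greenPotential, lapMatrix_mulVec_greenPotential]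
    abel
  rw [hLp.effRes_eq_sub ((hypercubeGraph d).isSymm_lapMatrix ℝ) hf]
  simp only [g, Pi.sub_apply, hammingDist_self, hammingDist_comm β α, hm, greenPotential_zero]
  ring

theorem neg_two_mul_greenPotential_two {d : ℕ} (hd : 2 ≤ d) :
    -2 * greenPotential d 2 = ((2 : ℝ) ^ (d - 1) - 1) / ((d - 1) * 2 ^ (d - 2)) := by
  obtain ⟨e, rfl⟩ := Nat.exists_eq_add_of_le' hd
  rw [show e + 2 - 1 = e + 1 from rfl, Nat.add_sub_cancel]
  simp only [greenPotential, potentialDrop, tail, sum_range_succ, sum_range_zero,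
    Nat.choose_zero_right, Nat.choose_one_right]
  push_cast
  rw [show (e : ℝ) + 2 - 1 = e + 1 by ring, sub_zero]
  field_simp
  ring

end Hypercube

/-- For the hypercube `Q_d` (`d ≥ 2`) with unit resistors, the effective resistance between
vertices at Hamming distance `2` equals `(2^{d-1} - 1)/((d-1) 2^{d-2})`. -/
theorem hypercube_distance_two_resistance (d : ℕ) (hd : 2 ≤ d)
    (Lp : Matrix (Fin d → ZMod 2) (Fin d → ZMod 2) ℝ)
    (hLp : IsMoorePenrose ((hypercubeGraph d).lapMatrix ℝ) Lp)
    (α β : Fin d → ZMod 2) (h2 : hammingDist α β = 2) :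
    effRes Lp α β = ((2 : ℝ) ^ (d - 1) - 1) / ((d - 1) * 2 ^ (d - 2)) := by
  rw [Hypercube.effRes_hypercubeGraph hLp h2, Hypercube.neg_two_mul_greenPotential_two hd]
end

section
/- For the Johnson graph J(n,d) (2 ≤ 2d ≤ n) with unit resistors, the effective resistance between adjacent vertices equals 2(n! − d!(n−d)!)/(d(n−d)·n!). -/
open Matrix

/-- The Johnson graph `J(n,d)`: vertices are the `d`-element subsets of `{1,…,n}`,
two subsets adjacent when their intersection has exactly `d - 1` elements. -/
def johnsonGraph (n d : ℕ) : SimpleGraph {s : Finset (Fin n) // s.card = d} where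
  Adj s t := (s.1 ∩ t.1).card = d - 1 ∧ s ≠ t
  symm := ⟨fun s t h => ⟨by rw [Finset.inter_comm]; exact h.1, h.2.symm⟩⟩
  loopless := ⟨fun s h => h.2 rfl⟩

instance (n d : ℕ) : DecidableRel (johnsonGraph n d).Adj := fun s t =>
  show Decidable ((s.1 ∩ t.1).card = d - 1 ∧ s ≠ t) from instDecidableAnd

/-!
The symmetric group on `Fin n` acts arc-transitively on `J(n,d)` by automorphisms, and the
Moore–Penrose pseudoinverse `Lp` of the Laplacian `L`, being unique, is invariant under every
automorphism. Hence `Lp` has constant diagonal and all edges have the same resistance `R`, so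
summing over the `κ = d(n-d)` neighbours of a vertex `α` gives `κ R = 2 (Lp L)_αα`. As `J(n,d)`
is connected, the columns of the symmetric matrix `1 - Lp L` lie in `ker L`, the constants, so
`1 - Lp L` is the constant matrix `1/N`, `N = C(n,d)`; thus `R = 2(N-1)/(Nκ)`.
-/

namespace IsMoorePenrose

variable {V : Type*} [Fintype V] [DecidableEq V] {L X Y : Matrix V V ℝ}

theorem self_mul_eq_self_mul (hX : IsMoorePenrose L X) (hY : IsMoorePenrose L Y) : L * X = L * Y :=
  calc L * X = (L * Y * L * X)ᵀ := by rw [hY.1, hX.2.2.1]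
    _ = L * X * (L * Y) := by
      rw [Matrix.mul_assoc, Matrix.transpose_mul, hX.2.2.1, hY.2.2.1]
    _ = L * Y := by rw [← Matrix.mul_assoc, hX.1]

theorem mul_self_eq_mul_self (hX : IsMoorePenrose L X) (hY : IsMoorePenrose L Y) : X * L = Y * L :=
  calc X * L = (X * (L * Y * L))ᵀ := by rw [hY.1, hX.2.2.2]
    _ = Y * L * (X * L) := by
      rw [← Matrix.mul_assoc, ← Matrix.mul_assoc, Matrix.mul_assoc (X * L),
        Matrix.transpose_mul, hX.2.2.2, hY.2.2.2]
    _ = Y * L := by rw [Matrix.mul_assoc, ← Matrix.mul_assoc L, hX.1]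

theorem unique_s9 (hX : IsMoorePenrose L X) (hY : IsMoorePenrose L Y) : X = Y :=
  calc X = X * (L * X) := by rw [← Matrix.mul_assoc, hX.2.1]
    _ = Y * L * Y := by
      rw [self_mul_eq_self_mul hX hY, ← Matrix.mul_assoc, mul_self_eq_mul_self hX hY]
    _ = Y := hY.2.1

theorem submatrix {W : Type*} [Fintype W] [DecidableEq W] (h : IsMoorePenrose L X) (e : W ≃ V) :
    IsMoorePenrose (L.submatrix e e) (X.submatrix e e) := by
  obtain ⟨h₁, h₂, h₃, h₄⟩ := h
  simp only [IsMoorePenrose, submatrix_mul_equiv, transpose_submatrix, h₁, h₂, h₃, h₄,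
    and_self]

theorem apply_eq_of_submatrix_eq (h : IsMoorePenrose L X) (e : V ≃ V)
    (hL : L.submatrix e e = L) (u v : V) : X (e u) (e v) = X u v := by
  have := (hL ▸ h.submatrix e).unique_s9 h
  exact congrFun₂ this u v

end IsMoorePenrose

namespace SimpleGraph

variable {V W : Type*} [Fintype V] [DecidableEq V] [Fintype W] [DecidableEq W]
  {G : SimpleGraph V} {H : SimpleGraph W} [DecidableRel G.Adj] [DecidableRel H.Adj]

theorem Iso.lapMatrix_submatrix {R : Type*} [AddGroupWithOne R] (φ : G ≃g H) :
    (H.lapMatrix R).submatrix φ φ = G.lapMatrix R := by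
  ext u v
  simp [lapMatrix, degMatrix, adjMatrix_apply, diagonal_apply, φ.map_adj_iff]

theorem Preconnected.mul_lapMatrix_apply_self_of_isMoorePenrose (hG : G.Preconnected)
    {Lp : Matrix V V ℝ} (hLp : IsMoorePenrose (G.lapMatrix ℝ) Lp) (α : V) :
    (Lp * G.lapMatrix ℝ) α α = 1 - 1 / Fintype.card V := by
  set L := G.lapMatrix ℝ
  set Q := 1 - Lp * L with hQ
  have hLQ : L * Q = 0 := by
    rw [hQ, Matrix.mul_sub, Matrix.mul_one, ← Matrix.mul_assoc, hLp.1, sub_self]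
  have hcol (i i' j : V) : Q i j = Q i' j := by
    have : L *ᵥ (fun k => Q k j) = 0 := by
      funext i; simpa [Matrix.mul_apply, Matrix.mulVec, dotProduct] using congrFun₂ hLQ i j
    exact (G.lapMatrix_mulVec_eq_zero_iff_forall_reachable.mp this) i i' (hG i i')
  have hsymm : Qᵀ = Q := by rw [hQ, transpose_sub, transpose_one, hLp.2.2.2]
  have hrow : Q *ᵥ (fun _ => 1) = fun _ => 1 := by
    rw [hQ, sub_mulVec, one_mulVec, ← mulVec_mulVec, lapMatrix_mulVec_const_eq_zero, mulVec_zero,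
      sub_zero]
  have hconst (j : V) : Q α j = Q α α :=
    (congrFun₂ hsymm j α).trans (hcol j α α)
  have hsum : Fintype.card V * Q α α = 1 := by
    simpa [mulVec, dotProduct, hconst] using congrFun hrow α
  calc (Lp * L) α α = 1 - Q α α := by simp [hQ]
    _ = 1 - 1 / Fintype.card V := by rw [eq_one_div_of_mul_eq_one_right hsum]

theorem sum_effRes_neighborFinset {Lp : Matrix V V ℝ} {α : V}
    (hdiag : ∀ β, G.Adj α β → Lp β β = Lp α α) :
    ∑ β ∈ G.neighborFinset α, effRes Lp α β = 2 * (Lp * G.lapMatrix ℝ) α α := by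
  have hLα : (Lp * G.lapMatrix ℝ) α α =
      G.degree α * Lp α α - ∑ β ∈ G.neighborFinset α, Lp α β := by
    simp [lapMatrix, Matrix.mul_sub, degMatrix, mul_comm]
  have heff : ∀ β ∈ G.neighborFinset α, effRes Lp α β = 2 * Lp α α - 2 * Lp α β := by
    intro β hβ
    rw [effRes, hdiag β ((mem_neighborFinset G α β).mp hβ)]
    ring
  rw [Finset.sum_congr rfl heff, Finset.sum_sub_distrib, Finset.sum_const, ← Finset.mul_sum,
    card_neighborFinset_eq_degree, hLα, nsmul_eq_mul]
  ring

def IsArcTransitive (G : SimpleGraph V) : Prop :=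
  ∀ ⦃u v u' v' : V⦄, G.Adj u v → G.Adj u' v' → ∃ φ : G ≃g G, φ u = u' ∧ φ v = v'

theorem IsArcTransitive.degree_mul_effRes (hT : G.IsArcTransitive) (hG : G.Preconnected)
    {Lp : Matrix V V ℝ} (hLp : IsMoorePenrose (G.lapMatrix ℝ) Lp) {α β : V}
    (hadj : G.Adj α β) :
    G.degree α * effRes Lp α β = 2 * (1 - 1 / Fintype.card V) := by
  have hinv (φ : G ≃g G) (u v : V) : Lp (φ u) (φ v) = Lp u v :=
    hLp.apply_eq_of_submatrix_eq φ.toEquiv φ.lapMatrix_submatrix u v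
  have hdiag (β' : V) (h : G.Adj α β') : Lp β' β' = Lp α α := by
    obtain ⟨φ, hφα, -⟩ := hT h h.symm
    rw [← hφα, hinv]
  have hconst (β' : V) (h : β' ∈ G.neighborFinset α) : effRes Lp α β' = effRes Lp α β := by
    obtain ⟨φ, hφα, hφβ⟩ := hT hadj ((mem_neighborFinset G α β').mp h)
    calc effRes Lp α β' = effRes Lp (φ α) (φ β) := by rw [hφα, hφβ]
      _ = effRes Lp α β := by simp only [effRes, hinv]
  calc G.degree α * effRes Lp α β = ∑ β' ∈ G.neighborFinset α, effRes Lp α β' := by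
        rw [Finset.sum_congr rfl hconst, Finset.sum_const, card_neighborFinset_eq_degree,
          nsmul_eq_mul]
    _ = 2 * (1 - 1 / Fintype.card V) := by
        rw [sum_effRes_neighborFinset hdiag, hG.mul_lapMatrix_apply_self_of_isMoorePenrose hLp]

end SimpleGraph

theorem Finset.card_insert_erase {α : Type*} [DecidableEq α] {s : Finset α} {x y : α}
    (hx : x ∈ s) (hy : y ∉ s) : (insert y (s.erase x)).card = s.card := by
  rw [Finset.card_insert_of_notMem (fun h => hy (Finset.mem_of_mem_erase h)),
    Finset.card_erase_add_one hx]

namespace johnsonGraph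

open Finset

variable {n d : ℕ}

theorem adj_iff {s t : {s : Finset (Fin n) // s.card = d}} :
    (johnsonGraph n d).Adj s t ↔ ∃ x ∈ s.1, ∃ y ∉ s.1, t.1 = insert y (s.1.erase x) := by
  constructor
  · rintro ⟨hcard, hne⟩
    have hd : d ≠ 0 := by
      rintro rfl
      exact hne (Subtype.ext (by rw [card_eq_zero.mp s.2, card_eq_zero.mp t.2]))
    have hst : (s.1 \ t.1).card = 1 := by rw [card_sdiff, inter_comm, hcard, s.2]; omega
    have hts : (t.1 \ s.1).card = 1 := by rw [card_sdiff, hcard, t.2]; omega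
    obtain ⟨x, hx⟩ := card_eq_one.mp hst
    obtain ⟨y, hy⟩ := card_eq_one.mp hts
    refine ⟨x, (mem_sdiff.mp (hx ▸ mem_singleton_self x)).1, y,
      (mem_sdiff.mp (hy ▸ mem_singleton_self y)).2, ?_⟩
    ext a
    have hxa := Finset.ext_iff.mp hx a
    have hya := Finset.ext_iff.mp hy a
    simp only [mem_sdiff, mem_singleton] at hxa hya
    simp only [mem_insert, mem_erase]
    grind
  · rintro ⟨x, hx, y, hy, ht⟩
    refine ⟨?_, fun h => hy (by rw [h, ht]; exact mem_insert_self y _)⟩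
    rw [ht, inter_insert_of_notMem hy, inter_eq_right.mpr (erase_subset x s.1),
      card_erase_of_mem hx, s.2]

theorem degree_eq (s : {s : Finset (Fin n) // s.card = d}) :
    (johnsonGraph n d).degree s = d * (n - d) := by
  set f : Fin n × Fin n → Finset (Fin n) := fun p => insert p.2 (s.1.erase p.1)
  have himage : ((johnsonGraph n d).neighborFinset s).map (Function.Embedding.subtype _) =
      (s.1 ×ˢ s.1ᶜ).image f := by
    ext t
    simp only [mem_map, SimpleGraph.mem_neighborFinset, adj_iff, Function.Embedding.subtype_apply,
      mem_image, mem_product, mem_compl, Prod.exists, f]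
    constructor
    · rintro ⟨t, ⟨x, hx, y, hy, ht⟩, rfl⟩
      exact ⟨x, y, ⟨hx, hy⟩, ht.symm⟩
    · rintro ⟨x, y, ⟨hx, hy⟩, rfl⟩
      exact ⟨⟨_, (card_insert_erase hx hy).trans s.2⟩, ⟨x, hx, y, hy, rfl⟩, rfl⟩
  have hinj : Set.InjOn f (s.1 ×ˢ s.1ᶜ : Finset _) := by
    rintro ⟨x, y⟩ hxy ⟨x', y'⟩ hxy' h
    simp only [mem_coe, mem_product, mem_compl, f] at hxy hxy' h
    have hx := congrArg (x ∈ ·) h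
    have hy := congrArg (y ∈ ·) h
    simp only [mem_insert, mem_erase] at hx hy
    grind
  rw [← SimpleGraph.card_neighborFinset_eq_degree, ← card_map, himage, card_image_of_injOn hinj,
    card_product, card_compl, Fintype.card_fin, s.2]

theorem preconnected : (johnsonGraph n d).Preconnected := by
  intro s t
  induction hk : (s.1 \ t.1).card generalizing s with
  | zero =>
    have hst : s = t := Subtype.ext <| eq_of_subset_of_card_le
      (sdiff_eq_empty_iff_subset.mp (card_eq_zero.mp hk)) (by rw [s.2, t.2])
    rw [hst]
  | succ k ih =>
    obtain ⟨x, hx⟩ : (s.1 \ t.1).Nonempty := card_pos.mp (by omega)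
    obtain ⟨y, hy⟩ : (t.1 \ s.1).Nonempty :=
      card_pos.mp (by rw [← card_sdiff_comm (s.2.trans t.2.symm)]; omega)
    rw [mem_sdiff] at hx hy
    let s' : {s : Finset (Fin n) // s.card = d} :=
      ⟨insert y (s.1.erase x), (card_insert_erase hx.1 hy.2).trans s.2⟩
    have hadj : (johnsonGraph n d).Adj s s' := adj_iff.mpr ⟨x, hx.1, y, hy.2, rfl⟩
    have hk' : (s'.1 \ t.1).card = k := by
      have : s'.1 \ t.1 = (s.1 \ t.1).erase x := by
        ext a
        simp only [s', mem_sdiff, mem_insert, mem_erase]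
        grind
      rw [this, card_erase_of_mem (mem_sdiff.mpr hx), hk, Nat.add_sub_cancel]
    exact hadj.reachable.trans (ih s' hk')

def permIso (σ : Equiv.Perm (Fin n)) : johnsonGraph n d ≃g johnsonGraph n d where
  toEquiv := σ.finsetCongr.subtypeEquiv fun s => by simp
  map_rel_iff' {s t} := by
    simp only [johnsonGraph, Equiv.subtypeEquiv_apply, Equiv.finsetCongr_apply, ← map_inter,
      card_map, ne_eq, map_inj, Subtype.ext_iff]

theorem permIso_apply_coe (σ : Equiv.Perm (Fin n)) (s : {s : Finset (Fin n) // s.card = d}) :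
    (permIso σ s).1 = s.1.map σ.toEmbedding := rfl

theorem exists_permIso_apply_eq (s t : {s : Finset (Fin n) // s.card = d}) :
    ∃ σ, permIso σ s = t := by
  obtain ⟨σ, hσ⟩ := (Set.powersetCard.isPretransitive (α := Fin n) (n := d)).exists_smul_eq
    ⟨s.1, s.2⟩ ⟨t.1, t.2⟩
  refine ⟨σ, Subtype.ext ?_⟩
  simpa [permIso_apply_coe, map_eq_image, smul_finset_def] using congrArg Subtype.val hσ

theorem exists_permIso_fixing_apply_eq {s t₁ t₂ : {s : Finset (Fin n) // s.card = d}}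
    (h₁ : (johnsonGraph n d).Adj s t₁) (h₂ : (johnsonGraph n d).Adj s t₂) :
    ∃ σ, permIso σ s = s ∧ permIso σ t₁ = t₂ := by
  obtain ⟨x, hx, y, hy, ht₁⟩ := adj_iff.mp h₁
  obtain ⟨x', hx', y', hy', ht₂⟩ := adj_iff.mp h₂
  have hmem (a : Fin n) (ha : a ∈ s.1) : a ≠ y ∧ a ≠ y' := ⟨ne_of_mem_of_not_mem ha hy,
    ne_of_mem_of_not_mem ha hy'⟩
  set σ := Equiv.swap x x' * Equiv.swap y y'
  have hσx : σ x = x' := by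
    simp [σ, Equiv.swap_apply_of_ne_of_ne (hmem x hx).1 (hmem x hx).2]
  have hσy : σ y = y' := by
    simp [σ, Equiv.swap_apply_of_ne_of_ne (hmem x hx).2.symm (hmem x' hx').2.symm]
  have hσs : s.1.map σ.toEmbedding = s.1 := by
    refine eq_of_subset_of_card_le (fun b hb => ?_) (card_map _).ge
    obtain ⟨a, ha, rfl⟩ := mem_map.mp hb
    obtain ⟨hay, hay'⟩ := hmem a ha
    simp only [σ, Equiv.toEmbedding_apply, Equiv.Perm.mul_apply,
      Equiv.swap_apply_of_ne_of_ne hay hay', Equiv.swap_apply_def]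
    split_ifs <;> simp_all
  refine ⟨σ, Subtype.ext hσs, Subtype.ext ?_⟩
  rw [permIso_apply_coe, ht₁, ht₂, map_insert, map_erase, hσs]
  simp [hσx, hσy]

theorem isArcTransitive : (johnsonGraph n d).IsArcTransitive := by
  intro u v u' v' h h'
  obtain ⟨σ, hσ⟩ := exists_permIso_apply_eq u u'
  obtain ⟨τ, hτu, hτv⟩ :=
    exists_permIso_fixing_apply_eq (hσ ▸ (permIso σ).map_adj_iff.mpr h) h'
  exact ⟨(permIso σ).trans (permIso τ), by simp [hσ, hτu], by simp [hτv]⟩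

end johnsonGraph

theorem johnson_adjacent_resistance_general (n d : ℕ)
    (Lp : Matrix {s : Finset (Fin n) // s.card = d} {s : Finset (Fin n) // s.card = d} ℝ)
    (hLp : IsMoorePenrose ((johnsonGraph n d).lapMatrix ℝ) Lp)
    (α β : {s : Finset (Fin n) // s.card = d}) (hadj : (johnsonGraph n d).Adj α β) :
    effRes Lp α β =
      2 * ((n.factorial : ℝ) - (d.factorial : ℝ) * ((n - d).factorial : ℝ)) /
        ((d : ℝ) * ((n : ℝ) - (d : ℝ)) * (n.factorial : ℝ)) := by
  have hdn : d ≤ n := by simpa [α.2] using Finset.card_le_univ α.1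
  have hdeg : 0 < (johnsonGraph n d).degree α :=
    (johnsonGraph n d).degree_pos_iff_exists_adj α |>.mpr ⟨β, hadj⟩
  have hR := johnsonGraph.isArcTransitive.degree_mul_effRes johnsonGraph.preconnected hLp hadj
  rw [johnsonGraph.degree_eq] at hR hdeg
  rw [Fintype.card_finset_len, Fintype.card_fin] at hR
  have hfact : (n.choose d : ℝ) * d.factorial * (n - d).factorial = n.factorial := by
    exact_mod_cast Nat.choose_mul_factorial_mul_factorial hdn
  have hκ : (0 : ℝ) < d * ((n : ℝ) - d) := by
    rw [← Nat.cast_sub hdn]; exact_mod_cast hdeg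
  push_cast [Nat.cast_sub hdn] at hR
  rw [eq_div_iff (by positivity), ← hfact]
  have hC : (0 : ℝ) < n.choose d := by exact_mod_cast Nat.choose_pos hdn
  field_simp at hR
  linear_combination (d.factorial * (n - d).factorial : ℝ) * hR

/-- For the Johnson graph `J(n,d)` (`2 ≤ 2d ≤ n`) with unit resistors, the effective
resistance between adjacent vertices equals `2(n! - d!(n-d)!)/(d(n-d) n!)`. -/
theorem johnson_adjacent_resistance (n d : ℕ) (hd : 1 ≤ d) (hn : 2 * d ≤ n)
    (Lp : Matrix {s : Finset (Fin n) // s.card = d} {s : Finset (Fin n) // s.card = d} ℝ)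
    (hLp : IsMoorePenrose ((johnsonGraph n d).lapMatrix ℝ) Lp)
    (α β : {s : Finset (Fin n) // s.card = d}) (hadj : (johnsonGraph n d).Adj α β) :
    effRes Lp α β =
      2 * ((n.factorial : ℝ) - (d.factorial : ℝ) * ((n - d).factorial : ℝ)) /
        ((d : ℝ) * ((n : ℝ) - (d : ℝ)) * (n.factorial : ℝ)) :=
  johnson_adjacent_resistance_general n d Lp hLp α β hadj
end

section
/- For the Biggs–Smith graph (distance-regular, 102 vertices, intersection array {3,2,2,2,1,1,1;1,1,1,1,1,1,3}), the effective resistance between vertices at distance 7 (antipodal-type, maximal distance) equals 195/153 = 65/51. -/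
open Matrix

/-- Distance-regularity with diameter `d` and intersection numbers `b i`, `c i`. -/
def IsDistanceRegular {V : Type*} [Fintype V] (G : SimpleGraph V) (d : ℕ) (b c : ℕ → ℕ) : Prop :=
  G.Connected ∧ (∀ α β : V, G.dist α β ≤ d) ∧
  ∀ i, i ≤ d → ∀ α β : V, G.dist α β = i →
    ({γ : V | G.Adj β γ ∧ G.dist α γ = i + 1}.ncard = b i ∧
     {γ : V | G.Adj β γ ∧ G.dist α γ = i - 1}.ncard = c i)


/-!
For a vertex `a` let `f_a δ = -R (dist a δ) / 2`, where `R m` is the effective resistance at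
distance `m` computed by the resistance recursion. In a distance-regular graph the Laplacian
of a radial function `F ∘ dist a` at distance `i` is `b_i (F_i - F_{i+1}) + c_i (F_i - F_{i-1})`,
and the recursion for `R` says precisely that `L f_a = e_a - 𝟙 / N`. Hence `x = f_α - f_β`
solves `L x = e_α - e_β`, and for the Moore–Penrose inverse `P` of the symmetric matrix `L`,
`(e_α - e_β)ᵀ P (e_α - e_β) = xᵀ L P L x = xᵀ L x = x_α - x_β = R 7`.
-/

namespace IsMoorePenrose

variable {V : Type*} [Fintype V] [DecidableEq V] {L P Q : Matrix V V ℝ}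

lemma transpose_s16 (hP : IsMoorePenrose L P) : IsMoorePenrose Lᵀ Pᵀ := by
  obtain ⟨h₁, h₂, h₃, h₄⟩ := hP
  refine ⟨?_, ?_, ?_, ?_⟩
  · rw [← transpose_mul, ← transpose_mul, ← Matrix.mul_assoc, h₁]
  · rw [← transpose_mul, ← transpose_mul, ← Matrix.mul_assoc, h₂]
  · rw [← transpose_mul, transpose_transpose, h₄]
  · rw [← transpose_mul, transpose_transpose, h₃]

lemma unique_s16 (hP : IsMoorePenrose L P) (hQ : IsMoorePenrose L Q) : P = Q := by
  obtain ⟨hP₁, hP₂, hP₃, hP₄⟩ := hP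
  obtain ⟨hQ₁, hQ₂, hQ₃, hQ₄⟩ := hQ
  -- `L P` and `L Q` are both the orthogonal projector onto the range of `L`; dually `P L = Q L`
  have hLP : L * P = L * Q := by
    calc L * P = (L * Q * L * P)ᵀ := by rw [hQ₁, hP₃]
      _ = (L * P)ᵀ * (L * Q)ᵀ := by simp only [transpose_mul, Matrix.mul_assoc]
      _ = L * Q := by rw [hP₃, hQ₃, ← Matrix.mul_assoc, hP₁]
  have hPL : P * L = Q * L := by
    calc P * L = (P * (L * Q * L))ᵀ := by rw [hQ₁, hP₄]
      _ = (Q * L)ᵀ * (P * L)ᵀ := by simp only [transpose_mul, Matrix.mul_assoc]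
      _ = Q * L := by rw [hP₄, hQ₄, Matrix.mul_assoc, ← Matrix.mul_assoc L, hP₁]
  calc P = P * L * P := hP₂.symm
    _ = Q * L * Q := by rw [Matrix.mul_assoc, hLP, ← Matrix.mul_assoc, hPL]
    _ = Q := hQ₂

lemma transpose_eq (hL : L.IsSymm) (hP : IsMoorePenrose L P) : Pᵀ = P :=
  (hL ▸ hP.transpose_s16).unique_s16 hP

lemma effRes_eq_sub_of_mulVec_eq (hL : L.IsSymm) (hP : IsMoorePenrose L P) {x : V → ℝ}
    {α β : V} (hx : L *ᵥ x = Pi.single α 1 - Pi.single β 1) :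
    effRes P α β = x α - x β := by
  set w : V → ℝ := Pi.single α 1 - Pi.single β 1
  have hPsymm : P β α = P α β := congrFun (congrFun (hP.transpose_eq hL) α) β
  have hquad : w ⬝ᵥ (P *ᵥ w) = effRes P α β := by
    simp only [w, mulVec_sub, mulVec_single_one, sub_dotProduct, dotProduct_sub,
      single_one_dotProduct, col_apply, effRes, hPsymm]
    ring
  have henergy : w ⬝ᵥ (P *ᵥ w) = x ⬝ᵥ w := by
    have hxL : x ᵥ* L = w := by rw [← hx, ← vecMul_transpose, hL.eq]
    calc w ⬝ᵥ (P *ᵥ w) = (x ᵥ* L) ⬝ᵥ (P *ᵥ (L *ᵥ x)) := by rw [hxL, hx]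
      _ = x ⬝ᵥ ((L * P * L) *ᵥ x) := by rw [← dotProduct_mulVec, mulVec_mulVec, mulVec_mulVec]
      _ = x ⬝ᵥ w := by rw [hP.1, hx]
  rw [← hquad, henergy]
  simp only [w, dotProduct_sub, dotProduct_single_one]

end IsMoorePenrose

namespace IsDistanceRegular

variable {V : Type*} [Fintype V] {G : SimpleGraph V} [DecidableRel G.Adj]
  {d : ℕ} {b c : ℕ → ℕ}

lemma card_neighborFinset_filter_dist_eq (hG : IsDistanceRegular G d b c) (a γ : V) :
    (((G.neighborFinset γ).filter fun δ => G.dist a δ = G.dist a γ + 1).card = b (G.dist a γ)) ∧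
    (((G.neighborFinset γ).filter fun δ => G.dist a δ = G.dist a γ - 1).card = c (G.dist a γ)) := by
  obtain ⟨hb, hc⟩ := hG.2.2 _ (hG.2.1 a γ) a γ rfl
  simp only [← Set.ncard_coe_finset, Finset.coe_filter, SimpleGraph.mem_neighborFinset]
  exact ⟨hb, hc⟩

lemma lapMatrix_mulVec_comp_dist [DecidableEq V] (hG : IsDistanceRegular G d b c) (F : ℕ → ℝ)
    (a γ : V) :
    (G.lapMatrix ℝ *ᵥ fun δ => F (G.dist a δ)) γ =
      b (G.dist a γ) * (F (G.dist a γ) - F (G.dist a γ + 1)) +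
        c (G.dist a γ) * (F (G.dist a γ) - F (G.dist a γ - 1)) := by
  obtain ⟨hb, hc⟩ := hG.card_neighborFinset_filter_dist_eq a γ
  set i := G.dist a γ
  -- a neighbour of `γ` is at distance `i - 1`, `i` or `i + 1` from `a`; when `i = 0` the
  -- truncated `i - 1 = i` makes the second summand vanish as well
  have hterm : ∀ δ ∈ G.neighborFinset γ, F i - F (G.dist a δ) =
      (if G.dist a δ = i + 1 then F i - F (i + 1) else 0) +
        (if G.dist a δ = i - 1 then F i - F (i - 1) else 0) := by
    intro δ hδ
    have hadj : G.dist γ δ = 1 := SimpleGraph.dist_eq_one_iff_adj.mpr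
      ((G.mem_neighborFinset γ δ).mp hδ)
    have h₁ : G.dist a δ ≤ i + G.dist γ δ := hG.1.dist_triangle
    have h₂ : i ≤ G.dist a δ + G.dist δ γ := hG.1.dist_triangle
    rw [G.dist_comm (u := δ) (v := γ)] at h₂
    generalize G.dist a δ = k at *
    obtain rfl | rfl | rfl : k = i + 1 ∨ k = i - 1 ∨ k = i := by omega
    all_goals split_ifs <;> first | omega | (simp only [show i - 1 = i by omega]; ring) | simp
  rw [SimpleGraph.lapMatrix_mulVec_apply, ← G.card_neighborFinset_eq_degree, ← hb, ← hc,
    ← nsmul_eq_mul, ← Finset.sum_const, ← Finset.sum_sub_distrib, Finset.sum_congr rfl hterm,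
    Finset.sum_add_distrib, ← Finset.sum_filter, ← Finset.sum_filter]
  simp only [Finset.sum_const, nsmul_eq_mul]

end IsDistanceRegular

/-- `biggsSmithResistance m` is the effective resistance between two vertices at distance `m`
of the Biggs–Smith graph, from `R₀ = 0`, `R₁ = 2(N - 1)/(N κ)` and
`R_{m+1} - R_m = 2(N - ∑_{l ≤ m} κ_l)/(N κ_m b_m)` with `N = 102`,
`κ = (1, 3, 6, 12, 24, 24, 24, 8)`. -/
noncomputable def biggsSmithResistance (m : ℕ) : ℝ :=
  ([0, 101, 150, 173, 183, 190, 194, 195] : List ℝ).getD m 0 / 153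

lemma lapMatrix_mulVec_biggsSmithResistance {V : Type*} [Fintype V] [DecidableEq V]
    {G : SimpleGraph V} [DecidableRel G.Adj]
    (hG : IsDistanceRegular G 7 (fun i => [3, 2, 2, 2, 1, 1, 1].getD i 0)
      (fun i => [0, 1, 1, 1, 1, 1, 1, 3].getD i 0)) (a : V) :
    G.lapMatrix ℝ *ᵥ (fun δ => -biggsSmithResistance (G.dist a δ) / 2) =
      Pi.single a 1 - fun _ => 1 / 102 := by
  funext γ
  rw [hG.lapMatrix_mulVec_comp_dist (fun m => -biggsSmithResistance m / 2)]
  by_cases hγ : γ = a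
  · subst hγ
    norm_num [biggsSmithResistance]
  · have hpos : 0 < G.dist a γ := hG.1.pos_dist_of_ne (Ne.symm hγ)
    have hle : G.dist a γ ≤ 7 := hG.2.1 a γ
    interval_cases G.dist a γ <;> norm_num [biggsSmithResistance, hγ]

theorem biggsSmith_antipodal_resistance_general {V : Type*} [Fintype V] [DecidableEq V]
    (G : SimpleGraph V) [DecidableRel G.Adj]
    (hdr : IsDistanceRegular G 7 (fun i => [3, 2, 2, 2, 1, 1, 1].getD i 0)
      (fun i => [0, 1, 1, 1, 1, 1, 1, 3].getD i 0))
    (Lp : Matrix V V ℝ) (hLp : IsMoorePenrose (G.lapMatrix ℝ) Lp)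
    (α β : V) (hd : G.dist α β = 7) :
    effRes Lp α β = 65 / 51 := by
  set potential : V → V → ℝ := fun a δ => -biggsSmithResistance (G.dist a δ) / 2
  have hcurrent : G.lapMatrix ℝ *ᵥ (potential α - potential β) =
      Pi.single α 1 - Pi.single β 1 := by
    rw [mulVec_sub, lapMatrix_mulVec_biggsSmithResistance hdr,
      lapMatrix_mulVec_biggsSmithResistance hdr, sub_sub_sub_cancel_right]
  rw [hLp.effRes_eq_sub_of_mulVec_eq (G.isSymm_lapMatrix ℝ) hcurrent]
  simp only [potential, Pi.sub_apply, SimpleGraph.dist_self, hd, G.dist_comm (u := β)]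
  norm_num [biggsSmithResistance]

/-- For the Biggs–Smith graph (distance-regular on 102 vertices with intersection array
`{3,2,2,2,1,1,1; 1,1,1,1,1,1,3}`), the effective resistance between vertices at the
maximal distance 7 equals `195/153 = 65/51`. -/
theorem biggsSmith_antipodal_resistance {V : Type*} [Fintype V] [DecidableEq V]
    (G : SimpleGraph V) [DecidableRel G.Adj]
    (hN : Fintype.card V = 102)
    (hdr : IsDistanceRegular G 7 (fun i => [3, 2, 2, 2, 1, 1, 1].getD i 0)
      (fun i => [0, 1, 1, 1, 1, 1, 1, 3].getD i 0))
    (Lp : Matrix V V ℝ) (hLp : IsMoorePenrose (G.lapMatrix ℝ) Lp)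
    (α β : V) (hd : G.dist α β = 7) :
    effRes Lp α β = 65 / 51 :=
  biggsSmith_antipodal_resistance_general G hdr Lp hLp α β hd
end
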